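/- Let b be a real number and for integers n ≥ 3 define v_n(3/2,b) = (∑_{k=1}^{n−2} 1/k) + ((3/2)·n+b)/(n(n−1)) − ln n. If b ≠ −5/12, then lim_{n→∞} n²·(v_n(3/2,b) − γ) = b + 5/12, which is nonzero; in particular (v_n(3/2,b))_{n≥3} converges to γ with rate of convergence exactly n^{−2}. -/

import Mathlib

/-!
Since `∑_{k ≤ n-2} 1/k = H_n - 1/(n-1) - 1/n`, one has
`n² (v_n(3/2, b) - γ) = n² (H_n - log n - γ - 1/(2n) + 1/(12n²)) - 1/12 + (b + 1/2) n/(n-1)`,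
so everything rests on `H_n - log n - γ = 1/(2n) - 1/(12n²) + o(n⁻²)`.
The remainder `R_n` of this expansion tends to `0`, and the cubic Taylor bound for
`log (1 + 1/n)` shows that its consecutive differences are at most those of `3/n³`;
telescoping from infinity gives `|R_n| ≤ 3/n³`.
-/

open Filter Topology

noncomputable def v (a b : ℝ) (n : ℕ) : ℝ :=
  (∑ k ∈ Finset.Icc 1 (n - 2), (1 : ℝ) / k) + (a * n + b) / ((n : ℝ) * ((n : ℝ) - 1))
    - Real.log n

open Real

lemma abs_log_one_add_sub_cubic_le {t : ℝ} (ht₀ : 0 ≤ t) (ht₁ : t < 1) :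
    |log (1 + t) - (t - t ^ 2 / 2 + t ^ 3 / 3)| ≤ t ^ 4 / (1 - t) := by
  have h := abs_log_sub_add_sum_range_le (x := -t) (by rwa [abs_neg, abs_of_nonneg ht₀]) 3
  rw [abs_neg, abs_of_nonneg ht₀, sub_neg_eq_add] at h
  convert h using 2
  simp only [Finset.sum_range_succ, Finset.sum_range_zero]
  ring

lemma abs_le_of_abs_sub_succ_le {u f : ℕ → ℝ} {N : ℕ} (hu : Tendsto u atTop (𝓝 0))
    (hf : Tendsto f atTop (𝓝 0)) (hstep : ∀ n ≥ N, |u n - u (n + 1)| ≤ f n - f (n + 1))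
    {n : ℕ} (hn : N ≤ n) : |u n| ≤ f n := by
  have htel : ∀ m ≥ n, |u n - u m| ≤ f n - f m := by
    intro m hm
    induction m, hm using Nat.le_induction with
    | base => simp
    | succ m hm ih =>
      calc |u n - u (m + 1)| ≤ |u n - u m| + |u m - u (m + 1)| := abs_sub_le _ _ _
        _ ≤ (f n - f m) + (f m - f (m + 1)) := add_le_add ih (hstep m (hn.trans hm))
        _ = f n - f (m + 1) := by ring
  have hlim : Tendsto (fun m => f n - f m - |u n - u m|) atTop (𝓝 (f n - 0 - |u n - 0|)) :=
    (tendsto_const_nhds.sub hf).sub (tendsto_const_nhds.sub hu).abs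
  rw [sub_zero, sub_zero] at hlim
  exact sub_nonneg.mp <| ge_of_tendsto hlim <|
    (eventually_ge_atTop n).mono fun m hm => sub_nonneg.mpr (htel m hm)

noncomputable def eulerMascheroniRemainder (n : ℕ) : ℝ :=
  harmonic n - log n - eulerMascheroniConstant - 1 / (2 * n) + 1 / (12 * (n : ℝ) ^ 2)

lemma tendsto_eulerMascheroniRemainder :
    Tendsto eulerMascheroniRemainder atTop (𝓝 0) := by
  have hinv : Tendsto (fun n : ℕ => (n : ℝ)⁻¹) atTop (𝓝 0) := tendsto_inv_atTop_nhds_zero_nat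
  have h := ((tendsto_harmonic_sub_log.sub_const eulerMascheroniConstant).sub
    (hinv.const_mul (1 / 2))).add ((hinv.pow 2).const_mul (1 / 12))
  simp only [sub_self, mul_zero, add_zero, ne_eq, OfNat.ofNat_ne_zero,
    not_false_eq_true, zero_pow] at h
  refine h.congr fun n => ?_
  simp only [eulerMascheroniRemainder, one_div, mul_inv, inv_pow]

lemma abs_eulerMascheroniRemainder_sub_succ_le {n : ℕ} (hn : 2 ≤ n) :
    |eulerMascheroniRemainder n - eulerMascheroniRemainder (n + 1)|
      ≤ 3 / (n : ℝ) ^ 3 - 3 / ((n + 1 : ℕ) : ℝ) ^ 3 := by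
  have hx : (2 : ℝ) ≤ n := by exact_mod_cast hn
  set x : ℝ := (n : ℝ)
  have hlog : log (1 + 1 / x) = log (x + 1) - log x := by
    rw [← log_div (by positivity) (by positivity)]
    congr 1
    field_simp
  -- the cubic Taylor polynomial of `log (1 + 1 / x)` cancels the expansion up to this term
  have hsplit : eulerMascheroniRemainder n - eulerMascheroniRemainder (n + 1)
      = (log (1 + 1 / x) - (1 / x - (1 / x) ^ 2 / 2 + (1 / x) ^ 3 / 3))
        + (3 * x + 4) / (12 * x ^ 3 * (x + 1) ^ 2) := by
    simp only [eulerMascheroniRemainder, harmonic_succ]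
    push_cast
    rw [hlog]
    field_simp
    ring
  have hlog_err := abs_log_one_add_sub_cubic_le (t := 1 / x) (by positivity)
    ((div_lt_one (by positivity)).mpr (by linarith))
  have htail : (1 / x) ^ 4 / (1 - 1 / x) = 1 / (x ^ 3 * (x - 1)) := by
    field_simp
  rw [hsplit]
  push_cast
  calc _ ≤ |log (1 + 1 / x) - (1 / x - (1 / x) ^ 2 / 2 + (1 / x) ^ 3 / 3)|
        + |(3 * x + 4) / (12 * x ^ 3 * (x + 1) ^ 2)| := abs_add_le _ _
    _ ≤ 1 / (x ^ 3 * (x - 1)) + (3 * x + 4) / (12 * x ^ 3 * (x + 1) ^ 2) := by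
        rw [abs_of_nonneg (by positivity : (0 : ℝ) ≤ (3 * x + 4) / (12 * x ^ 3 * (x + 1) ^ 2)),
          ← htail]
        linarith
    _ ≤ 3 / x ^ 3 - 3 / (x + 1) ^ 3 := by
        have hx1 : 0 < x - 1 := by linarith
        rw [div_add_div _ _ (by positivity) (by positivity), div_sub_div _ _ (by positivity)
          (by positivity), div_le_div_iff₀ (by positivity) (by positivity)]
        have hcubic : 0 ≤ 93 * x ^ 3 - 40 * x ^ 2 - 105 * x - 44 := by nlinarith
        nlinarith [mul_nonneg (by positivity : (0 : ℝ) ≤ x ^ 6 * (x + 1) ^ 2) hcubic]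

lemma abs_eulerMascheroniRemainder_le {n : ℕ} (hn : 2 ≤ n) :
    |eulerMascheroniRemainder n| ≤ 3 / (n : ℝ) ^ 3 := by
  have hf : Tendsto (fun n : ℕ => 3 / (n : ℝ) ^ 3) atTop (𝓝 0) := tendsto_const_nhds.div_atTop
    ((tendsto_pow_atTop (by norm_num)).comp tendsto_natCast_atTop_atTop)
  exact abs_le_of_abs_sub_succ_le tendsto_eulerMascheroniRemainder hf
    (fun m hm => abs_eulerMascheroniRemainder_sub_succ_le hm) hn

lemma tendsto_sq_mul_eulerMascheroniRemainder :
    Tendsto (fun n : ℕ => (n : ℝ) ^ 2 * eulerMascheroniRemainder n) atTop (𝓝 0) := by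
  refine squeeze_zero_norm' ?_ (tendsto_const_nhds.div_atTop tendsto_natCast_atTop_atTop)
    (a := fun n : ℕ => 3 / (n : ℝ))
  filter_upwards [eventually_ge_atTop 2] with n hn
  calc ‖(n : ℝ) ^ 2 * eulerMascheroniRemainder n‖
      = (n : ℝ) ^ 2 * |eulerMascheroniRemainder n| := by
        rw [norm_mul, norm_pow, Real.norm_natCast, Real.norm_eq_abs]
    _ ≤ (n : ℝ) ^ 2 * (3 / (n : ℝ) ^ 3) :=
        mul_le_mul_of_nonneg_left (abs_eulerMascheroniRemainder_le hn) (by positivity)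
    _ = 3 / n := by field_simp

lemma v_eq_harmonic (a b : ℝ) {n : ℕ} (hn : 2 ≤ n) :
    v a b n = harmonic n - log n + ((a - 2) * n + b + 1) / ((n : ℝ) * ((n : ℝ) - 1)) := by
  obtain ⟨m, rfl⟩ : ∃ m, n = m + 2 := ⟨n - 2, by omega⟩
  have hsum : (∑ k ∈ Finset.Icc 1 m, (1 : ℝ) / k) = harmonic m := by
    simp [harmonic_eq_sum_Icc]
  simp only [v, Nat.add_sub_cancel, hsum, harmonic_succ]
  push_cast
  have : (m : ℝ) + 2 - 1 ≠ 0 := by linarith [(m.cast_nonneg : (0 : ℝ) ≤ m)]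
  field_simp
  ring

lemma sq_mul_v_three_halves_sub_eulerMascheroni (b : ℝ) {n : ℕ} (hn : 2 ≤ n) :
    (n : ℝ) ^ 2 * (v (3 / 2) b n - eulerMascheroniConstant)
      = (n : ℝ) ^ 2 * eulerMascheroniRemainder n - 1 / 12 + (b + 1 / 2) * (n / (n + -1)) := by
  have hx : (2 : ℝ) ≤ n := by exact_mod_cast hn
  rw [v_eq_harmonic _ _ hn, eulerMascheroniRemainder]
  have : (n : ℝ) - 1 ≠ 0 := by linarith
  have : (n : ℝ) + -1 ≠ 0 := by linarith
  field_simp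
  ring

theorem rate_two (b : ℝ) (hb : b ≠ -(5 / 12)) :
    Tendsto (fun n : ℕ => (n : ℝ) ^ 2 * (v (3 / 2) b n - Real.eulerMascheroniConstant)) atTop
      (𝓝 (b + 5 / 12)) ∧ b + 5 / 12 ≠ 0 := by
  refine ⟨?_, fun h => hb (by linarith)⟩
  have hlim := (tendsto_sq_mul_eulerMascheroniRemainder.sub_const (1 / 12)).add
    ((tendsto_natCast_div_add_atTop (-1 : ℝ)).const_mul (b + 1 / 2))
  rw [show (0 : ℝ) - 1 / 12 + (b + 1 / 2) * 1 = b + 5 / 12 by ring] at hlim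
  exact hlim.congr' <| (eventually_ge_atTop 2).mono fun n hn =>
    (sq_mul_v_three_halves_sub_eulerMascheroni b hn).symm
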